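/- arXiv:1212.4186 — 2 statements merged into one kernel-verified Lean document; each statement's English description precedes it below -/
import Mathlib

section
/- Let ħ > 0, let V : ℝ³ × I → ℝ be smooth on an open time interval I, and let η : ℝ³ × I → ℝ be a smooth strictly positive function satisfying the backward heat equation with potential V: ħ ∂η/∂t = −(ħ²/2) Δη + V η. Define the forward drift B := ħ ∇ log η. Then ∂B/∂t + (B·∇)B + (ħ/2) ΔB = ∇V. -/
open MeasureTheory Real Set

noncomputable section

/-- Time partial derivative of a function of space `x ∈ ℝ³` and time `t`. -/
def pt (f : (Fin 3 → ℝ) → ℝ → ℝ) (x : Fin 3 → ℝ) (t : ℝ) : ℝ := deriv (f x) t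

/-- Spatial partial derivative `∂/∂x_i` of a function of space and time. -/
def pd (i : Fin 3) (f : (Fin 3 → ℝ) → ℝ → ℝ) (x : Fin 3 → ℝ) (t : ℝ) : ℝ :=
  deriv (fun s => f (Function.update x i s) t) (x i)

/-- Spatial Laplacian `Δ = Σᵢ ∂²/∂x_i²` of a function of space and time. -/
def lap (f : (Fin 3 → ℝ) → ℝ → ℝ) (x : Fin 3 → ℝ) (t : ℝ) : ℝ := ∑ i, pd i (pd i f) x t

/-- Spatial partial derivative `∂/∂x_i` of a function of space only. -/
def pds (i : Fin 3) (f : (Fin 3 → ℝ) → ℝ) (x : Fin 3 → ℝ) : ℝ :=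
  deriv (fun s => f (Function.update x i s)) (x i)

/-! The Hopf–Cole substitution `S := ħ log η` turns the backward heat equation into the
Hamilton–Jacobi–Bellman equation `V = ∂ₜS + ½|∇S|² + (ħ/2)ΔS`. Since `B = ∇S`, applying `∂ᵢ`
to it and commuting partial derivatives (Schwarz) gives the claim, with
`∂ᵢ ½|∇S|² = Σⱼ ∂ⱼS ∂ⱼ∂ᵢS = (B·∇)Bᵢ`. -/

open Topology
open scoped ContDiff

theorem fderiv_fderiv_apply_comm {E : Type*} [NormedAddCommGroup E] [NormedSpace ℝ E]
    {F G H : E → ℝ} {p v w : E} {n : WithTop ℕ∞} (hF : ContDiffAt ℝ n F p) (hn : 2 ≤ n)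
    (hG : G =ᶠ[𝓝 p] fun q => fderiv ℝ F q v) (hH : H =ᶠ[𝓝 p] fun q => fderiv ℝ F q w) :
    fderiv ℝ G p w = fderiv ℝ H p v := by
  have hF2 : ContDiffAt ℝ 2 F p := hF.of_le hn
  have hd : DifferentiableAt ℝ (fderiv ℝ F) p :=
    (hF2.fderiv_right (m := 1) le_rfl).differentiableAt one_ne_zero
  rw [hG.fderiv_eq, hH.fderiv_eq, fderiv_clm_apply hd (differentiableAt_const v),
    fderiv_clm_apply hd (differentiableAt_const w)]
  simpa using hF2.isSymmSndFDerivAt (by simp) w v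

def SpacetimeSmoothOn (I : Set ℝ) (f : (Fin 3 → ℝ) → ℝ → ℝ) : Prop :=
  ContDiffOn ℝ ∞ (Function.uncurry f) (univ ×ˢ I)

section
variable {I : Set ℝ} {f g : (Fin 3 → ℝ) → ℝ → ℝ} {x : Fin 3 → ℝ} {t : ℝ}

theorem SpacetimeSmoothOn.contDiffAt (hI : IsOpen I) (hf : SpacetimeSmoothOn I f) (ht : t ∈ I) :
    ContDiffAt ℝ ∞ (Function.uncurry f) (x, t) :=
  ContDiffOn.contDiffAt hf (prod_mem_nhds Filter.univ_mem (hI.mem_nhds ht))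

theorem SpacetimeSmoothOn.hasDerivAt_pd (hI : IsOpen I) (hf : SpacetimeSmoothOn I f)
    (i : Fin 3) (ht : t ∈ I) :
    HasDerivAt (fun s => f (Function.update x i s) t)
      (fderiv ℝ (Function.uncurry f) (x, t) (Pi.single i 1, 0)) (x i) :=
  ((hf.contDiffAt hI ht).differentiableAt (by simp)).hasFDerivAt.comp_hasDerivAt_of_eq (x i)
    ((hasDerivAt_update x i (x i)).prodMk (hasDerivAt_const _ t)) (by simp)

theorem SpacetimeSmoothOn.hasDerivAt_pt (hI : IsOpen I) (hf : SpacetimeSmoothOn I f)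
    (ht : t ∈ I) :
    HasDerivAt (f x) (fderiv ℝ (Function.uncurry f) (x, t) (0, 1)) t :=
  ((hf.contDiffAt hI ht).differentiableAt (by simp)).hasFDerivAt.comp_hasDerivAt t
    ((hasDerivAt_const t x).prodMk (hasDerivAt_id t))

theorem SpacetimeSmoothOn.pd_eq_fderiv (hI : IsOpen I) (hf : SpacetimeSmoothOn I f)
    (i : Fin 3) (ht : t ∈ I) :
    pd i f x t = fderiv ℝ (Function.uncurry f) (x, t) (Pi.single i 1, 0) :=
  (hf.hasDerivAt_pd hI i ht).deriv

theorem SpacetimeSmoothOn.pt_eq_fderiv (hI : IsOpen I) (hf : SpacetimeSmoothOn I f)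
    (ht : t ∈ I) :
    pt f x t = fderiv ℝ (Function.uncurry f) (x, t) (0, 1) :=
  (hf.hasDerivAt_pt hI ht).deriv

theorem SpacetimeSmoothOn.eventuallyEq_pd (hI : IsOpen I) (hf : SpacetimeSmoothOn I f)
    (i : Fin 3) (ht : t ∈ I) :
    Function.uncurry (pd i f) =ᶠ[𝓝 (x, t)]
      fun p => fderiv ℝ (Function.uncurry f) p (Pi.single i 1, 0) := by
  filter_upwards [prod_mem_nhds Filter.univ_mem (hI.mem_nhds ht)] with p hp
    using hf.pd_eq_fderiv hI i hp.2

theorem SpacetimeSmoothOn.eventuallyEq_pt (hI : IsOpen I) (hf : SpacetimeSmoothOn I f)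
    (ht : t ∈ I) :
    Function.uncurry (pt f) =ᶠ[𝓝 (x, t)] fun p => fderiv ℝ (Function.uncurry f) p (0, 1) := by
  filter_upwards [prod_mem_nhds Filter.univ_mem (hI.mem_nhds ht)] with p hp
    using hf.pt_eq_fderiv hI hp.2

theorem SpacetimeSmoothOn.pd (hI : IsOpen I) (hf : SpacetimeSmoothOn I f) (i : Fin 3) :
    SpacetimeSmoothOn I (pd i f) :=
  ((ContDiffOn.fderiv_of_isOpen hf (isOpen_univ.prod hI) (m := ∞) (by simp)).clm_apply
    contDiffOn_const).congr fun p hp => hf.pd_eq_fderiv hI i hp.2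

theorem SpacetimeSmoothOn.pt (hI : IsOpen I) (hf : SpacetimeSmoothOn I f) :
    SpacetimeSmoothOn I (pt f) :=
  ((ContDiffOn.fderiv_of_isOpen hf (isOpen_univ.prod hI) (m := ∞) (by simp)).clm_apply
    contDiffOn_const).congr fun p hp => hf.pt_eq_fderiv hI hp.2

theorem pd_comm (hI : IsOpen I) (hf : SpacetimeSmoothOn I f) (i j : Fin 3) (ht : t ∈ I) :
    pd i (pd j f) x t = pd j (pd i f) x t := by
  rw [(hf.pd hI j).pd_eq_fderiv hI i ht, (hf.pd hI i).pd_eq_fderiv hI j ht]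
  exact fderiv_fderiv_apply_comm (hf.contDiffAt hI ht) (by decide) (hf.eventuallyEq_pd hI j ht)
    (hf.eventuallyEq_pd hI i ht)

theorem pd_pt_comm (hI : IsOpen I) (hf : SpacetimeSmoothOn I f) (i : Fin 3) (ht : t ∈ I) :
    pd i (pt f) x t = pt (pd i f) x t := by
  rw [(hf.pt hI).pd_eq_fderiv hI i ht, (hf.pd hI i).pt_eq_fderiv hI ht]
  exact fderiv_fderiv_apply_comm (hf.contDiffAt hI ht) (by decide) (hf.eventuallyEq_pt hI ht)
    (hf.eventuallyEq_pd hI i ht)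

theorem SpacetimeSmoothOn.add (hf : SpacetimeSmoothOn I f) (hg : SpacetimeSmoothOn I g) :
    SpacetimeSmoothOn I fun y s => f y s + g y s :=
  ContDiffOn.add hf hg

theorem SpacetimeSmoothOn.const_mul (hf : SpacetimeSmoothOn I f) (c : ℝ) :
    SpacetimeSmoothOn I fun y s => c * f y s :=
  contDiffOn_const.mul hf

theorem SpacetimeSmoothOn.pow (hf : SpacetimeSmoothOn I f) (n : ℕ) :
    SpacetimeSmoothOn I fun y s => f y s ^ n :=
  ContDiffOn.pow hf n

theorem SpacetimeSmoothOn.sum {ι : Type*} {u : Finset ι} {g : ι → (Fin 3 → ℝ) → ℝ → ℝ}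
    (hg : ∀ j ∈ u, SpacetimeSmoothOn I (g j)) :
    SpacetimeSmoothOn I fun y s => ∑ j ∈ u, g j y s :=
  ContDiffOn.sum hg

theorem SpacetimeSmoothOn.log (hf : SpacetimeSmoothOn I f) (hpos : ∀ y, ∀ s ∈ I, 0 < f y s) :
    SpacetimeSmoothOn I fun y s => Real.log (f y s) :=
  ContDiffOn.log hf fun p hp => (hpos p.1 p.2 hp.2).ne'

theorem SpacetimeSmoothOn.lap (hI : IsOpen I) (hf : SpacetimeSmoothOn I f) :
    SpacetimeSmoothOn I (lap f) :=
  SpacetimeSmoothOn.sum fun i _ => (hf.pd hI i).pd hI i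

theorem SpacetimeSmoothOn.differentiableAt_pd (hI : IsOpen I) (hf : SpacetimeSmoothOn I f)
    (i : Fin 3) (ht : t ∈ I) :
    DifferentiableAt ℝ (fun s => f (Function.update x i s) t) (x i) :=
  (hf.hasDerivAt_pd hI i ht).differentiableAt

theorem pd_congr (h : ∀ y, ∀ s ∈ I, f y s = g y s) (i : Fin 3) (ht : t ∈ I) :
    pd i f x t = pd i g x t := by
  simp only [pd, h _ _ ht]

theorem pd_const_mul (c : ℝ) (i : Fin 3) :
    pd i (fun y s => c * f y s) = fun y s => c * pd i f y s := by
  ext y s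
  exact congrFun (deriv_const_mul_field' c) _

theorem pt_const_mul (c : ℝ) : pt (fun y s => c * f y s) = fun y s => c * pt f y s := by
  ext y s
  exact congrFun (deriv_const_mul_field' c) _

theorem lap_const_mul (c : ℝ) : lap (fun y s => c * f y s) = fun y s => c * lap f y s := by
  ext y s
  simp only [lap, pd_const_mul, Finset.mul_sum]

theorem pd_add (hI : IsOpen I) (hf : SpacetimeSmoothOn I f) (hg : SpacetimeSmoothOn I g)
    (i : Fin 3) (ht : t ∈ I) :
    pd i (fun y s => f y s + g y s) x t = pd i f x t + pd i g x t :=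
  deriv_fun_add (hf.differentiableAt_pd hI i ht) (hg.differentiableAt_pd hI i ht)

theorem pd_mul (hI : IsOpen I) (hf : SpacetimeSmoothOn I f) (hg : SpacetimeSmoothOn I g)
    (i : Fin 3) (ht : t ∈ I) :
    pd i (fun y s => f y s * g y s) x t = pd i f x t * g x t + f x t * pd i g x t := by
  simpa only [pd, Function.update_eq_self] using
    deriv_fun_mul (hf.differentiableAt_pd hI i ht) (hg.differentiableAt_pd hI i ht)

theorem pd_pow (hI : IsOpen I) (hf : SpacetimeSmoothOn I f) (n : ℕ) (i : Fin 3) (ht : t ∈ I) :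
    pd i (fun y s => f y s ^ n) x t = n * f x t ^ (n - 1) * pd i f x t := by
  simpa only [pd, Function.update_eq_self] using deriv_fun_pow (hf.differentiableAt_pd hI i ht) n

theorem pd_sum (hI : IsOpen I) {ι : Type*} {u : Finset ι} {g : ι → (Fin 3 → ℝ) → ℝ → ℝ}
    (hg : ∀ j ∈ u, SpacetimeSmoothOn I (g j)) (i : Fin 3) (ht : t ∈ I) :
    pd i (fun y s => ∑ j ∈ u, g j y s) x t = ∑ j ∈ u, pd i (g j) x t :=
  deriv_fun_sum fun j hj => (hg j hj).differentiableAt_pd hI i ht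

theorem pd_log (hI : IsOpen I) (hf : SpacetimeSmoothOn I f) (hfx : f x t ≠ 0)
    (i : Fin 3) (ht : t ∈ I) :
    pd i (fun y s => Real.log (f y s)) x t = pd i f x t / f x t := by
  simpa only [pd, Function.update_eq_self] using
    deriv.log (hf.differentiableAt_pd hI i ht) (by simpa only [Function.update_eq_self] using hfx)

theorem pt_log (hI : IsOpen I) (hf : SpacetimeSmoothOn I f) (hfx : f x t ≠ 0) (ht : t ∈ I) :
    pt (fun y s => Real.log (f y s)) x t = pt f x t / f x t :=
  deriv.log (hf.hasDerivAt_pt hI ht).differentiableAt hfx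

theorem pd_lap_comm (hI : IsOpen I) (hf : SpacetimeSmoothOn I f) (i : Fin 3) (ht : t ∈ I) :
    pd i (lap f) x t = lap (pd i f) x t := by
  show pd i (fun y s => ∑ j, pd j (pd j f) y s) x t = ∑ j, pd j (pd j (pd i f)) x t
  rw [pd_sum hI (fun j _ => (hf.pd hI j).pd hI j) i ht]
  refine Finset.sum_congr rfl fun j _ => ?_
  rw [pd_comm hI (hf.pd hI j) i j ht]
  exact pd_congr (fun y s hs => pd_comm hI hf i j hs) j ht

theorem pd_eq_mul_pd_log (hI : IsOpen I) (hf : SpacetimeSmoothOn I f)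
    (hpos : ∀ y, ∀ s ∈ I, 0 < f y s) (i : Fin 3) (ht : t ∈ I) :
    pd i f x t = f x t * pd i (fun y s => Real.log (f y s)) x t := by
  rw [pd_log hI hf (hpos x t ht).ne' i ht, mul_div_cancel₀ _ (hpos x t ht).ne']

theorem pt_eq_mul_pt_log (hI : IsOpen I) (hf : SpacetimeSmoothOn I f)
    (hpos : ∀ y, ∀ s ∈ I, 0 < f y s) (ht : t ∈ I) :
    pt f x t = f x t * pt (fun y s => Real.log (f y s)) x t := by
  rw [pt_log hI hf (hpos x t ht).ne' ht, mul_div_cancel₀ _ (hpos x t ht).ne']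

theorem lap_eq_mul_log (hI : IsOpen I) (hf : SpacetimeSmoothOn I f)
    (hpos : ∀ y, ∀ s ∈ I, 0 < f y s) (ht : t ∈ I) :
    lap f x t = f x t * (∑ j, pd j (fun y s => Real.log (f y s)) x t ^ 2
      + lap (fun y s => Real.log (f y s)) x t) := by
  set L := fun y s => Real.log (f y s)
  have hL : SpacetimeSmoothOn I L := hf.log hpos
  have hpd_pd : ∀ j, pd j (pd j f) x t = f x t * (pd j L x t ^ 2 + pd j (pd j L) x t) := by
    intro j
    rw [pd_congr (fun y s hs => pd_eq_mul_pd_log hI hf hpos j hs) j ht,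
      pd_mul hI hf (hL.pd hI j) j ht, pd_eq_mul_pd_log hI hf hpos j ht]
    ring
  simp only [lap, hpd_pd, ← Finset.mul_sum, Finset.sum_add_distrib]

theorem hamiltonJacobiBellman_of_backwardHeat (hI : IsOpen I) {hbar : ℝ}
    {V η : (Fin 3 → ℝ) → ℝ → ℝ} (hη : SpacetimeSmoothOn I η) (hpos : ∀ y, ∀ s ∈ I, 0 < η y s)
    (hPDE : ∀ y, ∀ s ∈ I, hbar * pt η y s = -(hbar ^ 2 / 2) * lap η y s + V y s * η y s) :
    let S := fun y s => hbar * Real.log (η y s)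
    ∀ y, ∀ s ∈ I, V y s = pt S y s + (1 / 2) * ∑ j, pd j S y s ^ 2 + (hbar / 2) * lap S y s := by
  intro S y s hs
  have h := hPDE y s hs
  rw [pt_eq_mul_pt_log hI hη hpos hs, lap_eq_mul_log hI hη hpos hs] at h
  simp only [S, pt_const_mul, pd_const_mul, lap_const_mul]
  apply mul_right_cancel₀ (hpos y s hs).ne'
  simp only [mul_pow, ← Finset.mul_sum]
  linear_combination -h

theorem newton_of_hamiltonJacobiBellman (hI : IsOpen I) {c : ℝ} {S V : (Fin 3 → ℝ) → ℝ → ℝ}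
    (hS : SpacetimeSmoothOn I S)
    (hHJB : ∀ y, ∀ s ∈ I, V y s = pt S y s + (1 / 2) * ∑ j, pd j S y s ^ 2 + c * lap S y s)
    (i : Fin 3) (ht : t ∈ I) :
    pt (pd i S) x t + ∑ j, pd j S x t * pd j (pd i S) x t + c * lap (pd i S) x t
      = pd i V x t := by
  have hkin : SpacetimeSmoothOn I fun y s => (1 / 2) * ∑ j, pd j S y s ^ 2 :=
    (SpacetimeSmoothOn.sum fun j _ => (hS.pd hI j).pow 2).const_mul _
  rw [pd_congr hHJB i ht, pd_add hI ((hS.pt hI).add hkin) ((hS.lap hI).const_mul c) i ht,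
    pd_add hI (hS.pt hI) hkin i ht]
  simp only [pd_const_mul]
  rw [pd_sum hI (fun j _ => (hS.pd hI j).pow 2) i ht, pd_pt_comm hI hS i ht, pd_lap_comm hI hS i ht]
  simp only [pd_pow hI (hS.pd hI _) 2 i ht, pd_comm hI hS i _ ht, Finset.mul_sum]
  ring_nf

end

theorem stochastic_newton_equation_general
    (hbar : ℝ)
    (I : Set ℝ) (hI : IsOpen I)
    (V : (Fin 3 → ℝ) → ℝ → ℝ)
    (η : (Fin 3 → ℝ) → ℝ → ℝ)
    (hsmooth : ContDiffOn ℝ (⊤ : ℕ∞) (fun p : (Fin 3 → ℝ) × ℝ => η p.1 p.2) (univ ×ˢ I))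
    (hpos : ∀ x, ∀ t ∈ I, 0 < η x t)
    (hPDE : ∀ x, ∀ t ∈ I,
      hbar * pt η x t = -(hbar ^ 2 / 2) * lap η x t + V x t * η x t)
    (B : (Fin 3 → ℝ) → ℝ → Fin 3 → ℝ)
    (hB : ∀ x t i, B x t i = hbar * pd i (fun y s => Real.log (η y s)) x t) :
    ∀ x, ∀ t ∈ I, ∀ i,
      pt (fun y s => B y s i) x t
        + (∑ j, B x t j * pd j (fun y s => B y s i) x t)
        + (hbar / 2) * lap (fun y s => B y s i) x t
      = pd i V x t := by
  intro x t ht i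
  set S := fun y s => hbar * Real.log (η y s)
  have hS : SpacetimeSmoothOn I S := (SpacetimeSmoothOn.log hsmooth hpos).const_mul hbar
  have hBS : ∀ j y s, B y s j = pd j S y s := fun j y s => by rw [hB, pd_const_mul]
  simp only [hBS]
  exact newton_of_hamiltonJacobiBellman hI hS
    (hamiltonJacobiBellman_of_backwardHeat hI hsmooth hpos hPDE) i ht

/-- **Stochastic Newton equation** (case `A = 0`).  If `η > 0` is smooth on `ℝ³ × I` and
solves the backward heat equation with (possibly time dependent) potential `V`,
`ħ ∂η/∂t = −(ħ²/2)Δη + Vη`, then the forward drift `B := ħ∇log η` satisfies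
`∂B/∂t + (B·∇)B + (ħ/2)ΔB = ∇V`. -/
theorem stochastic_newton_equation
    (hbar : ℝ) (hhbar : 0 < hbar)
    (I : Set ℝ) (hI : IsOpen I)
    (V : (Fin 3 → ℝ) → ℝ → ℝ)
    (hV : ContDiffOn ℝ (⊤ : ℕ∞) (fun p : (Fin 3 → ℝ) × ℝ => V p.1 p.2) (univ ×ˢ I))
    (η : (Fin 3 → ℝ) → ℝ → ℝ)
    (hsmooth : ContDiffOn ℝ (⊤ : ℕ∞) (fun p : (Fin 3 → ℝ) × ℝ => η p.1 p.2) (univ ×ˢ I))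
    (hpos : ∀ x, ∀ t ∈ I, 0 < η x t)
    (hPDE : ∀ x, ∀ t ∈ I,
      hbar * pt η x t = -(hbar ^ 2 / 2) * lap η x t + V x t * η x t)
    (B : (Fin 3 → ℝ) → ℝ → Fin 3 → ℝ)
    (hB : ∀ x t i, B x t i = hbar * pd i (fun y s => Real.log (η y s)) x t) :
    ∀ x, ∀ t ∈ I, ∀ i,
      pt (fun y s => B y s i) x t
        + (∑ j, B x t j * pd j (fun y s => B y s i) x t)
        + (hbar / 2) * lap (fun y s => B y s i) x t
      = pd i V x t :=
  stochastic_newton_equation_general hbar I hI V η hsmooth hpos hPDE B hB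
end
end

section
/- Let ħ > 0, let V : ℝ³ → ℝ and A : ℝ³ → ℝ³ be smooth, and on an open time interval I let η, η* : ℝ³ × I → ℝ be smooth strictly positive functions satisfying respectively ħ ∂η/∂t = −(ħ²/2)Δη + ħ A·∇η + (ħ/2)(∇·A)η − (1/2)|A|²η + V η and −ħ ∂η*/∂t = −(ħ²/2)Δη* − ħ A·∇η* − (ħ/2)(∇·A)η* − (1/2)|A|²η* + V η*. Define the forward drift B := ħ∇log η − A and the backward drift B* := −ħ∇log η* − A. Then for each component i = 1,2,3: (1/2)[(∂/∂t + B·∇ + (ħ/2)Δ)B_i + (∂/∂t + B*·∇ − (ħ/2)Δ)B*_i] = (1/2) Σ_j (B_j + B*_j)(∂A_j/∂x_i − ∂A_i/∂x_j) + ∂V/∂x_i. -/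
open MeasureTheory Real Set

noncomputable section

open Function Filter Topology
open scoped ContDiff

/-!
For `ε = ±1` let `ζ > 0` solve `εħ ∂ₜζ = H_ε ζ`, where `H₁ = H` and `H₋₁ = H⁺` (`ζ = η`, resp.
`ζ = η*`), and put `S = log ζ` and `C = εħ∇S − A` (so `C = B`, resp. `C = B*`). Dividing the
equation by `ζ` turns it into the Hamilton–Jacobi type equation
`εħ ∂ₜS + ½|C|² + ε(ħ/2) ∇·C = V`.
Differentiating it in `xᵢ` and using the symmetry of the second and third derivatives of `S`
(so that `∂ᵢCⱼ = ∂ⱼCᵢ + ∂ⱼAᵢ − ∂ᵢAⱼ`) gives the transport identity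
`∂ₜCᵢ + C·∇Cᵢ + ε(ħ/2) ΔCᵢ = Σⱼ Cⱼ(∂ᵢAⱼ − ∂ⱼAᵢ) + ε(ħ/2)(∂ᵢ ∇·A − ΔAᵢ) + ∂ᵢV`.
Averaging the identities for `ε = 1` and `ε = −1` cancels the last `ε`-term.
-/

section DirectionalDerivative

variable {E : Type*} [NormedAddCommGroup E] [NormedSpace ℝ E]

def dirDeriv (v : E) (F : E → ℝ) (q : E) : ℝ := fderiv ℝ F q v

@[simp]
theorem dirDeriv_zero (F : E → ℝ) (q : E) : dirDeriv 0 F q = 0 :=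
  map_zero _

theorem dirDeriv_congr_of_eventuallyEq {F G : E → ℝ} {q : E} (h : F =ᶠ[𝓝 q] G) (v : E) :
    dirDeriv v F q = dirDeriv v G q := by
  simp only [dirDeriv, h.fderiv_eq]

theorem ContDiffOn.dirDeriv {F : E → ℝ} {U : Set E} (hF : ContDiffOn ℝ ∞ F U) (hU : IsOpen U)
    (v : E) : ContDiffOn ℝ ∞ (dirDeriv v F) U :=
  (ContinuousLinearMap.apply ℝ ℝ v).contDiff.comp_contDiffOn (hF.fderiv_of_isOpen hU le_rfl)

theorem ContDiff.dirDeriv {F : E → ℝ} (hF : ContDiff ℝ ∞ F) (v : E) :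
    ContDiff ℝ ∞ (dirDeriv v F) :=
  (ContinuousLinearMap.apply ℝ ℝ v).contDiff.comp (hF.fderiv_right le_rfl)

theorem dirDeriv_comm {F : E → ℝ} {q : E} (hF : ContDiffAt ℝ 2 F q) (v w : E) :
    dirDeriv v (dirDeriv w F) q = dirDeriv w (dirDeriv v F) q := by
  have hd : DifferentiableAt ℝ (fderiv ℝ F) q :=
    (hF.fderiv_right (m := 1) le_rfl).differentiableAt one_ne_zero
  have second (v w : E) : dirDeriv v (dirDeriv w F) q = fderiv ℝ (fderiv ℝ F) q v w := by
    change fderiv ℝ (fun r => fderiv ℝ F r w) q v = _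
    rw [fderiv_clm_apply hd (differentiableAt_const w)]
    simp
  rw [second, second, hF.isSymmSndFDerivAt (by simp)]

theorem dirDeriv_dirDeriv_dirDeriv_comm {F : E → ℝ} {U : Set E} (hF : ContDiffOn ℝ ∞ F U)
    (hU : IsOpen U) {q : E} (hq : q ∈ U) (u v w : E) :
    dirDeriv u (dirDeriv v (dirDeriv w F)) q = dirDeriv w (dirDeriv u (dirDeriv v F)) q := by
  have hnear : dirDeriv v (dirDeriv w F) =ᶠ[𝓝 q] dirDeriv w (dirDeriv v F) := by
    filter_upwards [hU.mem_nhds hq] with r hr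
    exact dirDeriv_comm ((hF.contDiffAt (hU.mem_nhds hr)).of_le ENat.LEInfty.out) v w
  rw [dirDeriv_congr_of_eventuallyEq hnear]
  exact dirDeriv_comm (((hF.dirDeriv hU v).contDiffAt (hU.mem_nhds hq)).of_le ENat.LEInfty.out) u w

theorem dirDeriv_log {Z : E → ℝ} {q : E} (hZ : DifferentiableAt ℝ Z q) (hz : Z q ≠ 0) (v : E) :
    dirDeriv v (fun r => log (Z r)) q = dirDeriv v Z q / Z q := by
  simp [dirDeriv, fderiv.log hZ hz, div_eq_inv_mul]

theorem dirDeriv_dirDeriv_log {Z : E → ℝ} {U : Set E} (hZ : ContDiffOn ℝ ∞ Z U) (hU : IsOpen U)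
    (hz : ∀ r ∈ U, Z r ≠ 0) {q : E} (hq : q ∈ U) (v w : E) :
    dirDeriv v (dirDeriv w fun r => log (Z r)) q
      = dirDeriv v (dirDeriv w Z) q / Z q - dirDeriv v Z q * dirDeriv w Z q / Z q ^ 2 := by
  have hdiff {F : E → ℝ} (hF : ContDiffOn ℝ ∞ F U) {r : E} (hr : r ∈ U) : DifferentiableAt ℝ F r :=
    (hF.contDiffAt (hU.mem_nhds hr)).differentiableAt (by simp)
  have hlog : dirDeriv w (fun r => log (Z r)) =ᶠ[𝓝 q] fun r => dirDeriv w Z r * (Z r)⁻¹ := by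
    filter_upwards [hU.mem_nhds hq] with r hr
    rw [dirDeriv_log (hdiff hZ hr) (hz r hr), div_eq_mul_inv]
  have hquot : HasFDerivAt (fun r => dirDeriv w Z r * (Z r)⁻¹) _ q :=
    (hdiff (hZ.dirDeriv hU w) hq).hasFDerivAt.mul
      ((hasDerivAt_inv (hz q hq)).comp_hasFDerivAt q (hdiff hZ hq).hasFDerivAt)
  rw [dirDeriv_congr_of_eventuallyEq hlog, dirDeriv, hquot.fderiv]
  simp only [dirDeriv, add_apply, smul_apply, smul_eq_mul]
  field_simp
  ring

theorem dirDeriv_comp_fst {F : Type*} [NormedAddCommGroup F] [NormedSpace ℝ F]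
    {g : E → ℝ} {q : E × F} (hg : DifferentiableAt ℝ g q.1) (v : E × F) :
    dirDeriv v (fun r => g r.1) q = dirDeriv v.1 g q.1 := by
  have h : HasFDerivAt (fun r => g r.1) _ q := hg.hasFDerivAt.comp q hasFDerivAt_fst
  rw [dirDeriv, h.fderiv]
  simp [dirDeriv]

theorem dirDeriv_const_mul_sub_comp_fst {F : Type*} [NormedAddCommGroup F] [NormedSpace ℝ F]
    {X : E × F → ℝ} {g : E → ℝ} {q : E × F} (hX : DifferentiableAt ℝ X q)
    (hg : DifferentiableAt ℝ g q.1) (c : ℝ) (v : E × F) :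
    dirDeriv v (fun r => c * X r - g r.1) q = c * dirDeriv v X q - dirDeriv v.1 g q.1 := by
  have h : HasFDerivAt (fun r => c * X r - g r.1) _ q :=
    (hX.hasFDerivAt.const_mul c).sub (hg.hasFDerivAt.comp q hasFDerivAt_fst)
  rw [dirDeriv, h.fderiv]
  simp [dirDeriv]

theorem dirDeriv_mul_add_half_sum_sq_add_mul_sum {ι : Type*} [Fintype ι] {T : E → ℝ}
    {G D : ι → E → ℝ} {q : E} (hT : DifferentiableAt ℝ T q)
    (hG : ∀ j, DifferentiableAt ℝ (G j) q) (hD : ∀ j, DifferentiableAt ℝ (D j) q) (a b : ℝ)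
    (v : E) :
    dirDeriv v (fun r => a * T r + (1 / 2) * ∑ j, G j r ^ 2 + b * ∑ j, D j r) q
      = a * dirDeriv v T q + ∑ j, G j q * dirDeriv v (G j) q + b * ∑ j, dirDeriv v (D j) q := by
  have h : HasFDerivAt (fun r => a * T r + (1 / 2) * ∑ j, G j r ^ 2 + b * ∑ j, D j r) _ q :=
    ((hT.hasFDerivAt.const_mul a).add
      ((HasFDerivAt.fun_sum fun j _ => (hG j).hasFDerivAt.pow 2).const_mul (1 / 2))).add
      ((HasFDerivAt.fun_sum fun j _ => (hD j).hasFDerivAt).const_mul b)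
  rw [dirDeriv, h.fderiv]
  simp only [dirDeriv, add_apply, smul_apply, smul_eq_mul, sum_apply, nsmul_eq_mul,
    Finset.mul_sum, add_right_inj, add_left_inj]
  exact Finset.sum_congr rfl fun j _ => by ring

end DirectionalDerivative

abbrev SpaceTime : Type := (Fin 3 → ℝ) × ℝ

def spaceDir (i : Fin 3) : SpaceTime := (Pi.single i 1, 0)

def timeDir : SpaceTime := (0, 1)

@[simp]
theorem spaceDir_fst (i : Fin 3) : (spaceDir i).1 = Pi.single i 1 := rfl

@[simp]
theorem timeDir_fst : timeDir.1 = 0 := rfl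

theorem pds_eq_dirDeriv {g : (Fin 3 → ℝ) → ℝ} (hg : Differentiable ℝ g) (i : Fin 3) :
    pds i g = dirDeriv (Pi.single i 1) g := by
  ext x
  have hline := (hg (update x i (x i))).hasFDerivAt.comp_hasDerivAt _ (hasDerivAt_update x i (x i))
  rw [update_eq_self] at hline
  exact hline.deriv

section SlabCoordinates

variable {I : Set ℝ} {f : (Fin 3 → ℝ) → ℝ → ℝ} {G : SpaceTime → ℝ} {x : Fin 3 → ℝ} {t : ℝ}

theorem pd_eq_dirDeriv (hfG : ∀ y, ∀ s ∈ I, f y s = G (y, s)) (ht : t ∈ I)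
    (hG : DifferentiableAt ℝ G (x, t)) (i : Fin 3) :
    pd i f x t = dirDeriv (spaceDir i) G (x, t) := by
  rw [← update_eq_self i x] at hG
  have hline := hG.hasFDerivAt.comp_hasDerivAt (x i)
    ((hasDerivAt_update x i (x i)).prodMk (hasDerivAt_const (x i) t))
  rw [update_eq_self] at hline
  simp only [pd, hfG _ _ ht]
  exact hline.deriv

theorem pt_eq_dirDeriv (hI : IsOpen I) (hfG : ∀ y, ∀ s ∈ I, f y s = G (y, s)) (ht : t ∈ I)
    (hG : DifferentiableAt ℝ G (x, t)) :
    pt f x t = dirDeriv timeDir G (x, t) := by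
  have hline := hG.hasFDerivAt.comp_hasDerivAt t
    ((hasDerivAt_const t x).prodMk (hasDerivAt_id t))
  have hfG_near : f x =ᶠ[𝓝 t] fun s => G (x, s) := by
    filter_upwards [hI.mem_nhds ht] with s hs using hfG x s hs
  rw [pt, hfG_near.deriv_eq]
  exact hline.deriv

theorem lap_eq_sum_dirDeriv (hI : IsOpen I) (hfG : ∀ y, ∀ s ∈ I, f y s = G (y, s))
    (hG : ContDiffOn ℝ ∞ G (univ ×ˢ I)) (ht : t ∈ I) :
    lap f x t = ∑ j, dirDeriv (spaceDir j) (dirDeriv (spaceDir j) G) (x, t) := by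
  have hU : IsOpen (univ ×ˢ I : Set SpaceTime) := isOpen_univ.prod hI
  have hdiff {H : SpaceTime → ℝ} (hH : ContDiffOn ℝ ∞ H (univ ×ˢ I)) (y : Fin 3 → ℝ)
      {s : ℝ} (hs : s ∈ I) : DifferentiableAt ℝ H ((y, s) : SpaceTime) :=
    (hH.contDiffAt (hU.mem_nhds ⟨trivial, hs⟩)).differentiableAt (by simp)
  refine Finset.sum_congr rfl fun j _ => pd_eq_dirDeriv (fun y s hs => ?_) ht
    (hdiff (hG.dirDeriv hU _) x ht) j
  exact pd_eq_dirDeriv hfG hs (hdiff hG y hs) j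

end SlabCoordinates

section Drift

variable {ε ħ : ℝ} {A : (Fin 3 → ℝ) → Fin 3 → ℝ} {V : (Fin 3 → ℝ) → ℝ} {Z S : SpaceTime → ℝ}
  {U : Set SpaceTime}

def drift (ε ħ : ℝ) (A : (Fin 3 → ℝ) → Fin 3 → ℝ) (S : SpaceTime → ℝ) (j : Fin 3)
    (q : SpaceTime) : ℝ :=
  ε * ħ * dirDeriv (spaceDir j) S q - A q.1 j

/-- `H` for `ε = 1` and its formal adjoint `H⁺` for `ε = -1`. -/
def hamiltonianOp (ε ħ : ℝ) (A : (Fin 3 → ℝ) → Fin 3 → ℝ) (V : (Fin 3 → ℝ) → ℝ)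
    (Z : SpaceTime → ℝ) (q : SpaceTime) : ℝ :=
  -(ħ ^ 2 / 2) * ∑ j, dirDeriv (spaceDir j) (dirDeriv (spaceDir j) Z) q
    + ε * ħ * ∑ j, A q.1 j * dirDeriv (spaceDir j) Z q
    + ε * (ħ / 2) * (∑ j, dirDeriv (Pi.single j 1) (fun y => A y j) q.1) * Z q
    - (1 / 2) * (∑ j, A q.1 j ^ 2) * Z q + V q.1 * Z q

theorem ContDiffOn.drift (hS : ContDiffOn ℝ ∞ S U) (hU : IsOpen U) (hA : ContDiff ℝ ∞ A)
    (j : Fin 3) : ContDiffOn ℝ ∞ (drift ε ħ A S j) U :=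
  (contDiffOn_const.mul (hS.dirDeriv hU _)).sub
    ((contDiff_pi.1 hA j).comp_contDiffOn contDiffOn_fst)

theorem dirDeriv_drift (hS : ContDiffOn ℝ ∞ S U) (hU : IsOpen U) (hA : ContDiff ℝ ∞ A)
    {q : SpaceTime} (hq : q ∈ U) (j : Fin 3) (v : SpaceTime) :
    dirDeriv v (drift ε ħ A S j) q
      = ε * ħ * dirDeriv v (dirDeriv (spaceDir j) S) q - dirDeriv v.1 (fun y => A y j) q.1 :=
  dirDeriv_const_mul_sub_comp_fst
    (((hS.dirDeriv hU _).contDiffAt (hU.mem_nhds hq)).differentiableAt (by simp))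
    ((contDiff_pi.1 hA j).differentiable (by simp) _) _ v

theorem dirDeriv_dirDeriv_drift (hS : ContDiffOn ℝ ∞ S U) (hU : IsOpen U) (hA : ContDiff ℝ ∞ A)
    {q : SpaceTime} (hq : q ∈ U) (j : Fin 3) (v w : SpaceTime) :
    dirDeriv w (dirDeriv v (drift ε ħ A S j)) q
      = ε * ħ * dirDeriv w (dirDeriv v (dirDeriv (spaceDir j) S)) q
        - dirDeriv w.1 (dirDeriv v.1 fun y => A y j) q.1 := by
  have hnear : dirDeriv v (drift ε ħ A S j) =ᶠ[𝓝 q] fun r =>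
      ε * ħ * dirDeriv v (dirDeriv (spaceDir j) S) r - dirDeriv v.1 (fun y => A y j) r.1 := by
    filter_upwards [hU.mem_nhds hq] with r hr using dirDeriv_drift hS hU hA hr j v
  rw [dirDeriv_congr_of_eventuallyEq hnear]
  exact dirDeriv_const_mul_sub_comp_fst
    ((((hS.dirDeriv hU _).dirDeriv hU _).contDiffAt (hU.mem_nhds hq)).differentiableAt (by simp))
    (((contDiff_pi.1 hA j).dirDeriv _).differentiable (by simp) _) _ w

theorem hamiltonJacobi_of_pde (hε : ε = 1 ∨ ε = -1) (hA : ContDiff ℝ ∞ A) (hU : IsOpen U)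
    (hZ : ContDiffOn ℝ ∞ Z U) (hz : ∀ r ∈ U, Z r ≠ 0) {q : SpaceTime} (hq : q ∈ U)
    (hPDE : ε * ħ * dirDeriv timeDir Z q = hamiltonianOp ε ħ A V Z q) :
    ε * ħ * dirDeriv timeDir (fun r => log (Z r)) q
      + (1 / 2) * ∑ j, drift ε ħ A (fun r => log (Z r)) j q ^ 2
      + ε * (ħ / 2) * ∑ j, dirDeriv (spaceDir j) (drift ε ħ A (fun r => log (Z r)) j) q
      = V q.1 := by
  have hdiv (j : Fin 3) := dirDeriv_drift (ε := ε) (ħ := ħ) (hZ.log hz) hU hA hq j (spaceDir j)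
  have hlog (v : SpaceTime) :=
    dirDeriv_log ((hZ.contDiffAt (hU.mem_nhds hq)).differentiableAt (by simp)) (hz q hq) v
  have hlog2 (j : Fin 3) := dirDeriv_dirDeriv_log hZ hU hz hq (spaceDir j) (spaceDir j)
  simp only [hdiv]
  simp only [drift, hlog, hlog2, spaceDir_fst]
  simp only [hamiltonianOp, Fin.sum_univ_three] at hPDE ⊢
  field_simp [hz q hq]
  rcases hε with rfl | rfl <;> linear_combination (2 * Z q) * hPDE

theorem drift_transport_of_hamiltonJacobi (hA : ContDiff ℝ ∞ A) (hU : IsOpen U)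
    (hS : ContDiffOn ℝ ∞ S U)
    (hHJ : ∀ r ∈ U, ε * ħ * dirDeriv timeDir S r + (1 / 2) * ∑ j, drift ε ħ A S j r ^ 2
      + ε * (ħ / 2) * ∑ j, dirDeriv (spaceDir j) (drift ε ħ A S j) r = V r.1)
    {q : SpaceTime} (hq : q ∈ U) (hV : DifferentiableAt ℝ V q.1) (i : Fin 3) :
    dirDeriv timeDir (drift ε ħ A S i) q
        + ∑ j, drift ε ħ A S j q * dirDeriv (spaceDir j) (drift ε ħ A S i) q
        + ε * (ħ / 2) * ∑ j, dirDeriv (spaceDir j) (dirDeriv (spaceDir j) (drift ε ħ A S i)) q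
      = ∑ j, drift ε ħ A S j q * (dirDeriv (Pi.single i 1) (fun y => A y j) q.1
            - dirDeriv (Pi.single j 1) (fun y => A y i) q.1)
        + ε * (ħ / 2) * ∑ j, (dirDeriv (Pi.single i 1) (dirDeriv (Pi.single j 1) fun y => A y j) q.1
            - dirDeriv (Pi.single j 1) (dirDeriv (Pi.single j 1) fun y => A y i) q.1)
        + dirDeriv (Pi.single i 1) V q.1 := by
  have hdiff {F : SpaceTime → ℝ} (hF : ContDiffOn ℝ ∞ F U) : DifferentiableAt ℝ F q :=
    (hF.contDiffAt (hU.mem_nhds hq)).differentiableAt (by simp)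
  have hHJ_i : dirDeriv (spaceDir i) (fun r => ε * ħ * dirDeriv timeDir S r
      + (1 / 2) * ∑ j, drift ε ħ A S j r ^ 2
      + ε * (ħ / 2) * ∑ j, dirDeriv (spaceDir j) (drift ε ħ A S j) r) q
      = dirDeriv (Pi.single i 1) V q.1 := by
    rw [dirDeriv_congr_of_eventuallyEq (eventuallyEq_of_mem (hU.mem_nhds hq) hHJ),
      dirDeriv_comp_fst hV, spaceDir_fst]
  rw [dirDeriv_mul_add_half_sum_sq_add_mul_sum (hdiff (hS.dirDeriv hU _))
    (fun j => hdiff (hS.drift hU hA j))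
    (fun j => hdiff ((hS.drift hU hA j).dirDeriv hU _))] at hHJ_i
  have hswap (v : SpaceTime) :
      dirDeriv v (dirDeriv (spaceDir i) S) q = dirDeriv (spaceDir i) (dirDeriv v S) q :=
    dirDeriv_comm ((hS.contDiffAt (hU.mem_nhds hq)).of_le ENat.LEInfty.out) _ _
  have hswap3 (j : Fin 3) :=
    dirDeriv_dirDeriv_dirDeriv_comm hS hU hq (spaceDir j) (spaceDir j) (spaceDir i)
  simp only [dirDeriv_drift hS hU hA hq, dirDeriv_dirDeriv_drift hS hU hA hq, spaceDir_fst,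
    timeDir_fst, dirDeriv_zero, hswap, hswap3, Fin.sum_univ_three] at hHJ_i ⊢
  linear_combination hHJ_i

end Drift

section Coordinates

variable {ε ħ : ℝ} {A : (Fin 3 → ℝ) → Fin 3 → ℝ} {V : (Fin 3 → ℝ) → ℝ} {I : Set ℝ}
  {ζ : (Fin 3 → ℝ) → ℝ → ℝ}

theorem hamiltonianOp_uncurry_eq (hA : ContDiff ℝ ∞ A) (hI : IsOpen I)
    (hζ : ContDiffOn ℝ ∞ (uncurry ζ) (univ ×ˢ I)) {x : Fin 3 → ℝ} {t : ℝ} (ht : t ∈ I) :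
    hamiltonianOp ε ħ A V (uncurry ζ) (x, t)
      = -(ħ ^ 2 / 2) * lap ζ x t + ε * ħ * (∑ j, A x j * pd j ζ x t)
        + ε * (ħ / 2) * (∑ j, pds j (fun y => A y j) x) * ζ x t
        - (1 / 2) * (∑ j, (A x j) ^ 2) * ζ x t + V x * ζ x t := by
  have hζd : DifferentiableAt ℝ (uncurry ζ) (x, t) :=
    (hζ.contDiffAt ((isOpen_univ.prod hI).mem_nhds ⟨trivial, ht⟩)).differentiableAt (by simp)
  have hζζ : ∀ y, ∀ s ∈ I, ζ y s = uncurry ζ (y, s) := fun _ _ _ => rfl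
  simp only [hamiltonianOp, lap_eq_sum_dirDeriv hI hζζ hζ ht, pd_eq_dirDeriv hζζ ht hζd,
    fun j => pds_eq_dirDeriv ((contDiff_pi.1 hA j).differentiable (by simp)) j,
    uncurry_apply_pair]

theorem drift_transport_of_pde (hε : ε = 1 ∨ ε = -1) (hV : Differentiable ℝ V)
    (hA : ContDiff ℝ ∞ A) (hI : IsOpen I) (hζ : ContDiffOn ℝ ∞ (uncurry ζ) (univ ×ˢ I))
    (hζ0 : ∀ x, ∀ t ∈ I, ζ x t ≠ 0)
    (hPDE : ∀ x, ∀ t ∈ I,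
      ε * ħ * pt ζ x t =
        -(ħ ^ 2 / 2) * lap ζ x t + ε * ħ * (∑ j, A x j * pd j ζ x t)
          + ε * (ħ / 2) * (∑ j, pds j (fun y => A y j) x) * ζ x t
          - (1 / 2) * (∑ j, (A x j) ^ 2) * ζ x t + V x * ζ x t)
    {C : (Fin 3 → ℝ) → ℝ → Fin 3 → ℝ}
    (hC : ∀ x, ∀ t ∈ I, ∀ i, C x t i = ε * ħ * pd i (fun y s => log (ζ y s)) x t - A x i)
    (x : Fin 3 → ℝ) {t : ℝ} (ht : t ∈ I) (i : Fin 3) :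
    pt (fun y s => C y s i) x t + (∑ j, C x t j * pd j (fun y s => C y s i) x t)
        + ε * (ħ / 2) * lap (fun y s => C y s i) x t
      = (∑ j, C x t j * (pds i (fun y => A y j) x - pds j (fun y => A y i) x))
        + ε * (ħ / 2) * (∑ j, (pds i (pds j fun y => A y j) x - pds j (pds j fun y => A y i) x))
        + pds i V x := by
  set U : Set SpaceTime := univ ×ˢ I
  have hU : IsOpen U := isOpen_univ.prod hI
  have hmem {y : Fin 3 → ℝ} {s : ℝ} (hs : s ∈ I) : ((y, s) : SpaceTime) ∈ U := ⟨trivial, hs⟩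
  set S : SpaceTime → ℝ := fun r => log (uncurry ζ r)
  have hz : ∀ r ∈ U, uncurry ζ r ≠ 0 := fun r hr => hζ0 r.1 r.2 hr.2
  have hS : ContDiffOn ℝ ∞ S U := hζ.log hz
  have hdiff {F : SpaceTime → ℝ} (hF : ContDiffOn ℝ ∞ F U) {y : Fin 3 → ℝ} {s : ℝ}
      (hs : s ∈ I) : DifferentiableAt ℝ F (y, s) :=
    (hF.contDiffAt (hU.mem_nhds (hmem hs))).differentiableAt (by simp)
  have hζζ : ∀ y, ∀ s ∈ I, ζ y s = uncurry ζ (y, s) := fun _ _ _ => rfl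
  have hlogS : ∀ y, ∀ s ∈ I, log (ζ y s) = S (y, s) := fun _ _ _ => rfl
  have hHJ : ∀ r ∈ U, ε * ħ * dirDeriv timeDir S r + (1 / 2) * ∑ j, drift ε ħ A S j r ^ 2
      + ε * (ħ / 2) * ∑ j, dirDeriv (spaceDir j) (drift ε ħ A S j) r = V r.1 := by
    rintro ⟨y, s⟩ ⟨-, hs⟩
    refine hamiltonJacobi_of_pde hε hA hU hζ hz (hmem hs) ?_
    rw [hamiltonianOp_uncurry_eq hA hI hζ hs, ← hPDE y s hs, pt_eq_dirDeriv hI hζζ hs (hdiff hζ hs)]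
  have hCS (k : Fin 3) : ∀ y, ∀ s ∈ I, C y s k = drift ε ħ A S k (y, s) := fun y s hs => by
    rw [hC y s hs, pd_eq_dirDeriv hlogS hs (hdiff hS hs)]
    rfl
  have hAd (j : Fin 3) := (contDiff_pi.1 hA j).differentiable (by simp)
  have hAdd (j k : Fin 3) :=
    ((contDiff_pi.1 hA j).dirDeriv (Pi.single k 1)).differentiable (by simp)
  have hGd : DifferentiableAt ℝ (drift ε ħ A S i) (x, t) := hdiff (hS.drift hU hA i) ht
  simp only [pt_eq_dirDeriv hI (hCS i) ht hGd, pd_eq_dirDeriv (hCS i) ht hGd,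
    lap_eq_sum_dirDeriv hI (hCS i) (hS.drift hU hA i) ht, hCS _ x t ht, pds_eq_dirDeriv (hAd _),
    pds_eq_dirDeriv (hAdd _ _), pds_eq_dirDeriv hV]
  exact drift_transport_of_hamiltonJacobi hA hU hS hHJ (hmem ht) (hV x) i

end Coordinates

theorem time_symmetric_stochastic_newton_with_lorentz_force_general
    (hbar : ℝ)
    (V : (Fin 3 → ℝ) → ℝ) (hV : ContDiff ℝ (⊤ : ℕ∞) V)
    (A : (Fin 3 → ℝ) → Fin 3 → ℝ) (hA : ContDiff ℝ (⊤ : ℕ∞) A)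
    (I : Set ℝ) (hI : IsOpen I)
    (η ηstar : (Fin 3 → ℝ) → ℝ → ℝ)
    (hηsmooth : ContDiffOn ℝ (⊤ : ℕ∞) (fun p : (Fin 3 → ℝ) × ℝ => η p.1 p.2) (univ ×ˢ I))
    (hηstarsmooth :
      ContDiffOn ℝ (⊤ : ℕ∞) (fun p : (Fin 3 → ℝ) × ℝ => ηstar p.1 p.2) (univ ×ˢ I))
    (hηpos : ∀ x, ∀ t ∈ I, 0 < η x t)
    (hηstarpos : ∀ x, ∀ t ∈ I, 0 < ηstar x t)
    (hPDE : ∀ x, ∀ t ∈ I,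
      hbar * pt η x t =
        -(hbar ^ 2 / 2) * lap η x t + hbar * (∑ j, A x j * pd j η x t)
          + (hbar / 2) * (∑ j, pds j (fun y => A y j) x) * η x t
          - (1 / 2) * (∑ j, (A x j) ^ 2) * η x t + V x * η x t)
    (hPDEstar : ∀ x, ∀ t ∈ I,
      -(hbar * pt ηstar x t) =
        -(hbar ^ 2 / 2) * lap ηstar x t - hbar * (∑ j, A x j * pd j ηstar x t)
          - (hbar / 2) * (∑ j, pds j (fun y => A y j) x) * ηstar x t
          - (1 / 2) * (∑ j, (A x j) ^ 2) * ηstar x t + V x * ηstar x t)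
    (B Bstar : (Fin 3 → ℝ) → ℝ → Fin 3 → ℝ)
    (hB : ∀ x t i, B x t i = hbar * pd i (fun y s => Real.log (η y s)) x t - A x i)
    (hBstar : ∀ x t i,
      Bstar x t i = -(hbar * pd i (fun y s => Real.log (ηstar y s)) x t) - A x i) :
    ∀ x, ∀ t ∈ I, ∀ i,
      (1 / 2) * ((pt (fun y s => B y s i) x t
            + (∑ j, B x t j * pd j (fun y s => B y s i) x t)
            + (hbar / 2) * lap (fun y s => B y s i) x t)
          + (pt (fun y s => Bstar y s i) x t
            + (∑ j, Bstar x t j * pd j (fun y s => Bstar y s i) x t)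
            - (hbar / 2) * lap (fun y s => Bstar y s i) x t))
      = (1 / 2) * (∑ j, (B x t j + Bstar x t j)
            * (pds i (fun y => A y j) x - pds j (fun y => A y i) x))
          + pds i V x := by
  intro x t ht i
  have hVd : Differentiable ℝ V := hV.differentiable (by simp)
  have hforward := drift_transport_of_pde (ε := 1) (C := B) (Or.inl rfl) hVd hA hI hηsmooth
    (fun x t ht => (hηpos x t ht).ne') (fun x t ht => by linear_combination hPDE x t ht)
    (fun x t _ i => by rw [hB]; ring) x ht i
  have hbackward :=
    drift_transport_of_pde (ε := -1) (C := Bstar) (Or.inr rfl) hVd hA hI hηstarsmooth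
    (fun x t ht => (hηstarpos x t ht).ne') (fun x t ht => by linear_combination hPDEstar x t ht)
    (fun x t _ i => by rw [hBstar]; ring) x ht i
  simp only [Fin.sum_univ_three] at hforward hbackward ⊢
  linear_combination (1 / 2) * hforward + (1 / 2) * hbackward

/-- **Time-symmetric dynamical equation with Lorentz force.**  For positive solutions
`η` of `ħ∂η/∂t = Hη` and `η*` of `−ħ∂η*/∂t = H⁺η*`, the forward drift `B := ħ∇log η − A`
and the backward drift `B* := −ħ∇log η* − A` satisfy componentwise
`(1/2)(D_t B_i + D*_t B*_i) = (1/2)Σ_j (B_j + B*_j)(∂A_j/∂x_i − ∂A_i/∂x_j) + ∂V/∂x_i`,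
where `D_t = ∂/∂t + B·∇ + (ħ/2)Δ` and `D*_t = ∂/∂t + B*·∇ − (ħ/2)Δ`. -/
theorem time_symmetric_stochastic_newton_with_lorentz_force
    (hbar : ℝ) (hhbar : 0 < hbar)
    (V : (Fin 3 → ℝ) → ℝ) (hV : ContDiff ℝ (⊤ : ℕ∞) V)
    (A : (Fin 3 → ℝ) → Fin 3 → ℝ) (hA : ContDiff ℝ (⊤ : ℕ∞) A)
    (I : Set ℝ) (hI : IsOpen I)
    (η ηstar : (Fin 3 → ℝ) → ℝ → ℝ)
    (hηsmooth : ContDiffOn ℝ (⊤ : ℕ∞) (fun p : (Fin 3 → ℝ) × ℝ => η p.1 p.2) (univ ×ˢ I))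
    (hηstarsmooth :
      ContDiffOn ℝ (⊤ : ℕ∞) (fun p : (Fin 3 → ℝ) × ℝ => ηstar p.1 p.2) (univ ×ˢ I))
    (hηpos : ∀ x, ∀ t ∈ I, 0 < η x t)
    (hηstarpos : ∀ x, ∀ t ∈ I, 0 < ηstar x t)
    (hPDE : ∀ x, ∀ t ∈ I,
      hbar * pt η x t =
        -(hbar ^ 2 / 2) * lap η x t + hbar * (∑ j, A x j * pd j η x t)
          + (hbar / 2) * (∑ j, pds j (fun y => A y j) x) * η x t
          - (1 / 2) * (∑ j, (A x j) ^ 2) * η x t + V x * η x t)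
    (hPDEstar : ∀ x, ∀ t ∈ I,
      -(hbar * pt ηstar x t) =
        -(hbar ^ 2 / 2) * lap ηstar x t - hbar * (∑ j, A x j * pd j ηstar x t)
          - (hbar / 2) * (∑ j, pds j (fun y => A y j) x) * ηstar x t
          - (1 / 2) * (∑ j, (A x j) ^ 2) * ηstar x t + V x * ηstar x t)
    (B Bstar : (Fin 3 → ℝ) → ℝ → Fin 3 → ℝ)
    (hB : ∀ x t i, B x t i = hbar * pd i (fun y s => Real.log (η y s)) x t - A x i)
    (hBstar : ∀ x t i,
      Bstar x t i = -(hbar * pd i (fun y s => Real.log (ηstar y s)) x t) - A x i) :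
    ∀ x, ∀ t ∈ I, ∀ i,
      (1 / 2) * ((pt (fun y s => B y s i) x t
            + (∑ j, B x t j * pd j (fun y s => B y s i) x t)
            + (hbar / 2) * lap (fun y s => B y s i) x t)
          + (pt (fun y s => Bstar y s i) x t
            + (∑ j, Bstar x t j * pd j (fun y s => Bstar y s i) x t)
            - (hbar / 2) * lap (fun y s => Bstar y s i) x t))
      = (1 / 2) * (∑ j, (B x t j + Bstar x t j)
            * (pds i (fun y => A y j) x - pds j (fun y => A y i) x))
          + pds i V x :=
  time_symmetric_stochastic_newton_with_lorentz_force_general hbar V hV A hA I hI η ηstar hηsmooth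
    hηstarsmooth hηpos hηstarpos hPDE hPDEstar B Bstar hB hBstar
end
end
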